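/- Let α, k, h₀, D∞ be positive reals and ξ > 0. Define T(x,t) = -(h₀D∞√(πα)/k) · erf(ξ)/(1 + (h₀√(πα)/k)·erf(ξ)) · [1 - erf(x/(2√(αt)))/erf(ξ)] and s(t) = 2ξ√(αt). Then for all t > 0 and all x with 0 < x < s(t): -D∞ < T(0,t) ≤ T(x,t) < 0. -/

import Mathlib

/-
The temperature is `T = -D∞ · c · (1 - erf η / erf ξ)` with the similarity variable
`η = x / (2√(αt))` and `c = β / (1 + β)`, where `β = (h₀√(πα)/k) erf ξ > 0`.
Since `erf` is strictly increasing with `erf 0 = 0`, on `0 < x < s(t)` we have `0 < η < ξ`,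
hence `0 < erf η / erf ξ < 1`; together with `0 < c < 1` this gives all three inequalities,
the value at `x = 0` being `-D∞ · c`.
-/

open Real Filter Set Topology

/-- The error function `erf x = (2/√π) ∫₀ˣ exp(-t²) dt`. -/
noncomputable def erf (x : ℝ) : ℝ := (2 / Real.sqrt π) * ∫ t in (0:ℝ)..x, Real.exp (-t ^ 2)

lemma erf_zero : erf 0 = 0 := by simp [erf]

lemma erf_strictMono : StrictMono erf := by
  intro a b hab
  have hint : ∀ u v : ℝ, IntervalIntegrable (fun t : ℝ => exp (-t ^ 2)) MeasureTheory.volume u v :=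
    fun u v => (by fun_prop : Continuous fun t : ℝ => exp (-t ^ 2)).intervalIntegrable u v
  have hpos : 0 < ∫ t in a..b, exp (-t ^ 2) :=
    intervalIntegral.intervalIntegral_pos_of_pos (hint a b) (fun _ => exp_pos _) hab
  have hsplit := intervalIntegral.integral_add_adjacent_intervals (hint 0 a) (hint a b)
  unfold erf
  rw [← hsplit, mul_add]
  have : 0 < 2 / sqrt π := by positivity
  linarith [mul_pos this hpos]

lemma erf_pos {x : ℝ} (hx : 0 < x) : 0 < erf x := erf_zero ▸ erf_strictMono hx

lemma erf_div_erf_mem_Ioo {η ξ : ℝ} (hη : 0 < η) (hηξ : η < ξ) :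
    erf η / erf ξ ∈ Ioo 0 1 :=
  ⟨div_pos (erf_pos hη) (erf_pos (hη.trans hηξ)),
    (div_lt_one (erf_pos (hη.trans hηξ))).2 (erf_strictMono hηξ)⟩

lemma div_one_add_self_mem_Ioo {β : ℝ} (hβ : 0 < β) : β / (1 + β) ∈ Ioo 0 1 :=
  ⟨by positivity, (div_lt_one (by positivity)).2 (by linarith)⟩

lemma neg_mul_bounds {D c r : ℝ} (hD : 0 < D) (hc : c ∈ Ioo 0 1) (hr : r ∈ Ioo 0 1) :
    -D < -D * c ∧ -D * c ≤ -D * c * (1 - r) ∧ -D * c * (1 - r) < 0 := by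
  obtain ⟨hc0, hc1⟩ := hc
  obtain ⟨hr0, hr1⟩ := hr
  have hDc : 0 < D * c := mul_pos hD hc0
  refine ⟨?_, ?_, ?_⟩
  · nlinarith
  · nlinarith [mul_pos hDc hr0]
  · nlinarith [mul_pos hDc (sub_pos.2 hr1)]

/-- The explicit temperature of the convective mushy-zone problem satisfies
`-D∞ < T(0,t) ≤ T(x,t) < 0` for all `t > 0` and `0 < x < s(t)`. -/
theorem stmt_6 (α k h₀ Dinf ξ : ℝ) (hα : 0 < α) (hk : 0 < k) (hh : 0 < h₀)
    (hD : 0 < Dinf) (hξ : 0 < ξ)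
    (T : ℝ → ℝ → ℝ) (s : ℝ → ℝ)
    (hT : ∀ x t, T x t =
      -(h₀ * Dinf * Real.sqrt (π * α) / k) *
        (erf ξ / (1 + (h₀ * Real.sqrt (π * α) / k) * erf ξ)) *
        (1 - erf (x / (2 * Real.sqrt (α * t))) / erf ξ))
    (hs : ∀ t, s t = 2 * ξ * Real.sqrt (α * t)) :
    ∀ t > (0:ℝ), ∀ x, 0 < x → x < s t →
      -Dinf < T 0 t ∧ T 0 t ≤ T x t ∧ T x t < 0 := by
  intro t ht x hx hxs
  set β := h₀ * sqrt (π * α) / k * erf ξ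
  have hβ : 0 < β := mul_pos (by positivity) (erf_pos hξ)
  have hsqrt : 0 < sqrt (α * t) := sqrt_pos.2 (mul_pos hα ht)
  have hη : x / (2 * sqrt (α * t)) < ξ := by
    rw [div_lt_iff₀ (by positivity)]
    linarith [hs t]
  have hTx : ∀ y, T y t = -Dinf * (β / (1 + β)) * (1 - erf (y / (2 * sqrt (α * t))) / erf ξ) :=
    fun y => by rw [hT]; ring
  have hT0 : T 0 t = -Dinf * (β / (1 + β)) := by
    rw [hTx, zero_div, erf_zero, zero_div, sub_zero, mul_one]
  rw [hT0, hTx x]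
  exact neg_mul_bounds hD (div_one_add_self_mem_Ioo hβ) (erf_div_erf_mem_Ioo (by positivity) hη)
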